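/- arXiv:2203.04224 — 9 statements merged into one kernel-verified Lean document; each statement's English description precedes it below -/
import Mathlib

section
/- For all (s,t) ∈ ℂ² with st - s³ - 1 ≠ 0, the point Ψ(s,t) = (3 + (3+3s+t)²/(st-s³-1), 3 + s(3+3s+t)²/(st-s³-1), 3 + t(3+3s+t)²/(st-s³-1)) satisfies P(Ψ(s,t)) = 0, where P is Lawton's polynomial. -/
noncomputable def LawtonP (x y z : ℂ) : ℂ :=
  414 - 108 * x + x ^ 3 - 108 * y + 21 * x * y + y ^ 3
    - (51 - 9 * x - 9 * y + x * y) * z + z ^ 2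

theorem stmt_5 (s t : ℂ) (h : s * t - s ^ 3 - 1 ≠ 0) :
    LawtonP (3 + (3 + 3 * s + t) ^ 2 / (s * t - s ^ 3 - 1))
            (3 + s * (3 + 3 * s + t) ^ 2 / (s * t - s ^ 3 - 1))
            (3 + t * (3 + 3 * s + t) ^ 2 / (s * t - s ^ 3 - 1)) = 0 := by
  set q : ℂ := (3 + 3 * s + t) ^ 2 / (s * t - s ^ 3 - 1) with hq
  have h2 : q * (s * t - s ^ 3 - 1) = (3 + 3 * s + t) ^ 2 :=
    div_mul_cancel₀ _ h
  unfold LawtonP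
  linear_combination (-q ^ 2) * h2
end

section
/- For every b ∈ ℂ with b ≠ 0, the matrices ρ₁ = A₁ = [[1,1,0],[0,1,1],[0,0,1]] and ρ₂ = [[0, 3 - 3/b - b, (b-1)³/b²],[b, 3-b, 0],[0, -b, b]] satisfy: det ρ₂ = 1, tr ρ₂ = tr ρ₂² = 3, and tr(ρ₂ρ₁) = tr((ρ₂ρ₁)²) = 3; moreover tr(ρ₁ρ₂⁻¹) = 3 - b², tr(ρ₁⁻¹ρ₂) = 3, and tr(ρ₁ρ₂ρ₁⁻¹ρ₂⁻¹) = 3 + 3b² - b³. -/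
open Matrix

theorem stmt_6 (b : ℂ) (hb : b ≠ 0) :
    let ρ₁ : Matrix (Fin 3) (Fin 3) ℂ := !![1,1,0; 0,1,1; 0,0,1]
    let ρ₂ : Matrix (Fin 3) (Fin 3) ℂ :=
      !![0, 3 - 3 / b - b, (b - 1) ^ 3 / b ^ 2;
         b, 3 - b, 0;
         0, -b, b]
    ρ₂.det = 1 ∧ ρ₂.trace = 3 ∧ (ρ₂ * ρ₂).trace = 3 ∧
      (ρ₂ * ρ₁).trace = 3 ∧ ((ρ₂ * ρ₁) * (ρ₂ * ρ₁)).trace = 3 ∧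
      (ρ₁ * ρ₂⁻¹).trace = 3 - b ^ 2 ∧
      (ρ₁⁻¹ * ρ₂).trace = 3 ∧
      (ρ₁ * ρ₂ * ρ₁⁻¹ * ρ₂⁻¹).trace = 3 + 3 * b ^ 2 - b ^ 3 := by
  intro ρ₁ ρ₂
  have hdet : ρ₂.det = 1 := by
    simp only [ρ₂, det_fin_three, Matrix.cons_val', Matrix.cons_val_zero,
      Matrix.cons_val_one, Matrix.head_cons, Matrix.cons_val_two, Matrix.tail_cons,
      Matrix.empty_val', Matrix.cons_val_fin_one, Matrix.head_fin_const, Matrix.of_apply]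
    field_simp
    ring
  have hdet1 : ρ₁.det = 1 := by
    simp only [ρ₁, det_fin_three, Matrix.cons_val', Matrix.cons_val_zero,
      Matrix.cons_val_one, Matrix.head_cons, Matrix.cons_val_two, Matrix.tail_cons,
      Matrix.empty_val', Matrix.cons_val_fin_one, Matrix.head_fin_const, Matrix.of_apply]
    ring
  have hinv2 : ρ₂⁻¹ = ρ₂.adjugate := by
    rw [Matrix.inv_def, hdet]
    simp
  have hinv1 : ρ₁⁻¹ = ρ₁.adjugate := by
    rw [Matrix.inv_def, hdet1]
    simp
  refine ⟨hdet, ?_, ?_, ?_, ?_, ?_, ?_, ?_⟩ <;>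
  · simp only [ρ₁, ρ₂, hinv1, hinv2, adjugate_fin_three, trace_fin_three,
      Matrix.mul_apply, Fin.sum_univ_three, Matrix.cons_val', Matrix.cons_val_zero,
      Matrix.cons_val_one, Matrix.head_cons, Matrix.head_fin_const, Matrix.cons_val_fin_one,
      Matrix.cons_val_two, Matrix.tail_cons, Matrix.empty_val', Matrix.of_apply]
    all_goals try ring_nf
    all_goals try field_simp
    all_goals ring
end

section
/- For every (x,y,z) ∈ ℂ³ with y ≠ 3 and P(x,y,z) = 0 (P Lawton's polynomial), the matrix A₂ with rows [0, (3x+3y+z-21)/(y-3)², -(63+x²-15x-27y+3xy+3y²)/(y-3)³], [0, -(x-3)/(y-3), (30-6x-6y+xy-z)/(y-3)²], [y-3, 0, 3+(x-3)/(y-3)] has determinant 1. -/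
/-! Expanding along the first column, whose only nonzero entry is `y - 3`, gives
`det A₂ = N / (y - 3)³` for a polynomial `N`, and `N = (y - 3)³ - P(x, y, z)` identically. -/

open Matrix

theorem Matrix.det_fin_three_of_col_zero_eq_single_two {R : Type*} [CommRing R]
    (a b c d t f e : R) :
    (!![0, a, b; 0, c, d; t, f, e] : Matrix (Fin 3) (Fin 3) R).det = t * (a * d - b * c) := by
  rw [det_fin_three]
  simp only [Fin.isValue, of_apply, cons_val', cons_val_zero, cons_val_fin_one, cons_val_one,
    zero_mul, cons_val, sub_self, mul_zero, zero_add, add_zero]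
  ring

theorem lawtonP_eq_cube_sub (x y z : ℂ) :
    LawtonP x y z = (y - 3) ^ 3 - ((3*x + 3*y + z - 21) * (30 - 6*x - 6*y + x*y - z)
      - (x - 3) * (63 + x ^ 2 - 15*x - 27*y + 3*x*y + 3*y ^ 2)) := by
  unfold LawtonP
  ring

theorem stmt_7 (x y z : ℂ) (hy : y ≠ 3) (hP : LawtonP x y z = 0) :
    (!![0, (3*x + 3*y + z - 21) / (y - 3) ^ 2,
          -(63 + x ^ 2 - 15*x - 27*y + 3*x*y + 3*y ^ 2) / (y - 3) ^ 3;
        0, -(x - 3) / (y - 3), (30 - 6*x - 6*y + x*y - z) / (y - 3) ^ 2;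
        y - 3, 0, 3 + (x - 3) / (y - 3)] : Matrix (Fin 3) (Fin 3) ℂ).det = 1 := by
  have hy3 : y - 3 ≠ 0 := sub_ne_zero.mpr hy
  rw [lawtonP_eq_cube_sub] at hP
  rw [det_fin_three_of_col_zero_eq_single_two]
  field_simp
  linear_combination -hP
end

section
/- For every integer n, the matrices ρ₁ = [[1, 3+3n+n², 0],[0, 1, 3+3n+n²],[0,0,1]] and ρ₂ = [[0,0,-1],[1,0,3+n],[-n,-1,3]] lie in SL(3,ℤ), and ρ₁, ρ₂, and (ρ₂ρ₁)⁻¹ are all unipotent (trace 3 and trace of square equal to 3). -/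
open Matrix

theorem stmt_10 (n : ℤ) :
    let ρ₁ : Matrix (Fin 3) (Fin 3) ℤ := !![1, 3 + 3*n + n ^ 2, 0; 0, 1, 3 + 3*n + n ^ 2; 0,0,1]
    let ρ₂ : Matrix (Fin 3) (Fin 3) ℤ := !![0,0,-1; 1,0,3 + n; -n,-1,3]
    ρ₁.det = 1 ∧ ρ₂.det = 1 ∧
    ρ₁.trace = 3 ∧ (ρ₁ * ρ₁).trace = 3 ∧
    ρ₂.trace = 3 ∧ (ρ₂ * ρ₂).trace = 3 ∧
    ((ρ₂ * ρ₁)⁻¹).trace = 3 ∧ ((ρ₂ * ρ₁)⁻¹ * (ρ₂ * ρ₁)⁻¹).trace = 3 := by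
  intro ρ₁ ρ₂
  have hinv : (ρ₂ * ρ₁)⁻¹ =
      !![3 + n, 1 + 3*n + 3*n^2 + n^3, 3 + 3*n + n^2; 0, -n, -1; -1, 0, 0] := by
    apply Matrix.inv_eq_right_inv
    show ρ₂ * ρ₁ * _ = 1
    ext i j
    fin_cases i <;> fin_cases j <;>
      simp [ρ₁, ρ₂, Matrix.mul_apply, Fin.sum_univ_three, Matrix.one_apply] <;> ring
  rw [hinv]
  refine ⟨?_, ?_, ?_, ?_, ?_, ?_, ?_, ?_⟩ <;>
    · simp only [ρ₁, ρ₂, det_fin_three, Matrix.trace_fin_three, Matrix.mul_apply,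
        Fin.sum_univ_three, Matrix.of_apply, Matrix.cons_val', Matrix.cons_val_zero,
        Matrix.cons_val_one, Matrix.head_cons, Matrix.cons_val_two, Matrix.tail_cons,
        Matrix.head_fin_const, Matrix.empty_val', Matrix.cons_val_fin_one]
      ring
end

section
/- Define u₀ = 1, u₁ = 2, and u_{n+1} = 23 u_n - u_{n-1} - 4 for n ≥ 1; set kₙ = uₙ, lₙ = uₙ² + u_{n-1}, mₙ = (u_{n+1}+2)(uₙ+2) + 24. Then for all n ≥ 1, (3kₙ + lₙ + 3)² = mₙ (kₙ lₙ - kₙ³ - 1). -/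
def u : ℕ → ℤ
  | 0 => 1
  | 1 => 2
  | (n + 2) => 23 * u (n + 1) - u n - 4

lemma u_inv (n : ℕ) :
    u n ^ 2 + u (n + 1) ^ 2 - 23 * u n * u (n + 1) + 4 * u n + 4 * u (n + 1) + 29 = 0 := by
  induction n with
  | zero => simp [u]
  | succ m ih =>
    have h : u (m + 2) = 23 * u (m + 1) - u m - 4 := by rfl
    rw [h]; linear_combination ih

theorem stmt_11 (n : ℕ) (hn : 1 ≤ n) :
    (3 * u n + (u n ^ 2 + u (n - 1)) + 3) ^ 2 =
      ((u (n + 1) + 2) * (u n + 2) + 24) *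
        (u n * (u n ^ 2 + u (n - 1)) - u n ^ 3 - 1) := by
  obtain ⟨m, rfl⟩ := Nat.exists_eq_add_of_le hn
  have h : u (1 + m + 1) = 23 * u (m + 1) - u m - 4 := by
    rw [show 1 + m + 1 = m + 2 by ring]; rfl
  have h2 : 1 + m - 1 = m := by omega
  have h3 : (1 : ℕ) + m = m + 1 := by ring
  rw [h, h2, h3]
  linear_combination (u (m + 1) + 1) ^ 2 * u_inv m
end

section
/- With uₙ defined by u₀ = 1, u₁ = 2, u_{n+1} = 23 uₙ - u_{n-1} - 4, the quantity bₙ = 29 + uₙ² + uₙ(4 - 23 u_{n-1}) + u_{n-1}(4 + u_{n-1}) is independent of n and equal to 0 for all n ≥ 1. -/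
theorem stmt_12 (n : ℕ) (hn : 1 ≤ n) :
    29 + u n ^ 2 + u n * (4 - 23 * u (n - 1)) + u (n - 1) * (4 + u (n - 1)) = 0 := by
  induction n with
  | zero => omega
  | succ m ih =>
    match m, ih with
    | 0, _ => simp [u]
    | k + 1, ih =>
      have h := ih (by omega)
      simp only [Nat.add_sub_cancel] at *
      rw [show k + 1 + 1 = k + 2 from rfl, u]
      ring_nf
      ring_nf at h
      linarith
end

section
/- Suppose k, l, m are positive integers with (3k+l+3)² = m(kl - k³ - 1) and kl - k³ - 1 > 0. Write m = ab² with a squarefree. Then ab divides 3k+l+3, and conjugating the pair (A₁, ρ₂) with ρ₂ = [[0, (3k+l+3)/m, -(k²+3k+3)/m],[0, -k, -(3k+l+3-km)/m],[m, 0, 3+k]] by C = [[b/m, 0, bk/m],[0,1,0],[0,0,b]] yields a pair of matrices with integer entries: C⁻¹A₁C = [[1, m/b, 0],[0,1,b],[0,0,1]] and C⁻¹ρ₂C = [[-k, (3k+l+3)/b, -3(1+k)²],[0, -k, -b(3k+l+3-km)/m],[1, 0, 2k+3]]. -/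
open Matrix

set_option maxHeartbeats 2000000 in
theorem stmt_14 (k l m a b : ℤ)
    (hk : 0 < k) (hl : 0 < l) (hm : 0 < m)
    (hdio : (3 * k + l + 3) ^ 2 = m * (k * l - k ^ 3 - 1))
    (hpos : 0 < k * l - k ^ 3 - 1)
    (ha : Squarefree a) (hb : 0 < b) (hab : m = a * b ^ 2) :
    (a * b ∣ 3 * k + l + 3) ∧
    (let A₁ : Matrix (Fin 3) (Fin 3) ℚ := !![1,1,0; 0,1,1; 0,0,1]
     let ρ₂ : Matrix (Fin 3) (Fin 3) ℚ :=
       !![0, (3 * k + l + 3 : ℚ) / m, -((k : ℚ) ^ 2 + 3 * k + 3) / m;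
          0, -(k : ℚ), -((3 * k + l + 3 : ℚ) - k * m) / m;
          (m : ℚ), 0, 3 + k]
     let C : Matrix (Fin 3) (Fin 3) ℚ :=
       !![(b : ℚ) / m, 0, (b : ℚ) * k / m; 0, 1, 0; 0, 0, (b : ℚ)]
     C⁻¹ * A₁ * C = !![1, (m : ℚ) / b, 0; 0, 1, (b : ℚ); 0, 0, 1] ∧
     C⁻¹ * ρ₂ * C =
       !![-(k : ℚ), (3 * k + l + 3 : ℚ) / b, -3 * (1 + k) ^ 2;
          0, -(k : ℚ), -(b : ℚ) * ((3 * k + l + 3 : ℚ) - k * m) / m;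
          1, 0, 2 * k + 3]) := by
  have hbz : (b : ℤ) ≠ 0 := hb.ne'
  have hmz : (m : ℤ) ≠ 0 := hm.ne'
  constructor
  · -- a * b ∣ 3k + l + 3
    have hdvd : m ∣ (3 * k + l + 3) ^ 2 := ⟨k * l - k ^ 3 - 1, hdio⟩
    have hb2 : b ^ 2 ∣ (3 * k + l + 3) ^ 2 := by
      rw [hab] at hdvd; exact (dvd_mul_left _ _).trans hdvd
    have hbn : b ∣ 3 * k + l + 3 :=
      (Int.pow_dvd_pow_iff two_ne_zero).mp hb2
    obtain ⟨c, hc⟩ := hbn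
    have hac : a ∣ c ^ 2 := by
      rw [hab, hc] at hdvd
      have : a * b ^ 2 ∣ b ^ 2 * c ^ 2 := by
        convert hdvd using 1; ring
      rcases this with ⟨d, hd⟩
      refine ⟨d, ?_⟩
      have hb2z : (b : ℤ) ^ 2 ≠ 0 := pow_ne_zero _ hbz
      apply mul_left_cancel₀ hb2z
      rw [hd]; ring
    have := (ha.dvd_pow_iff_dvd two_ne_zero).mp hac
    rw [hc, mul_comm b c]
    exact mul_dvd_mul this dvd_rfl
  · have hbq : (b : ℚ) ≠ 0 := by exact_mod_cast hbz
    have hmq : (m : ℚ) ≠ 0 := by exact_mod_cast hmz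
    intro A₁ ρ₂ C
    have hCinv : C⁻¹ = !![(m : ℚ) / b, 0, -(k : ℚ) / b; 0, 1, 0; 0, 0, 1 / b] := by
      refine inv_eq_left_inv ?_
      show (_ : Matrix (Fin 3) (Fin 3) ℚ) * C = 1
      show _ * C = _
      simp only [C, Matrix.mul_fin_three]
      ext i j
      fin_cases i <;> fin_cases j <;>
        simp [Matrix.vecHead, Matrix.vecTail] <;> field_simp <;> ring
    constructor
    · rw [hCinv]
      show _ * A₁ * C = _
      simp only [C, A₁, Matrix.mul_fin_three]
      ext i j
      fin_cases i <;> fin_cases j <;>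
        simp [Matrix.vecHead, Matrix.vecTail] <;> field_simp <;> ring
    · rw [hCinv]
      show _ * ρ₂ * C = _
      simp only [C, ρ₂, Matrix.mul_fin_three]
      ext i j
      fin_cases i <;> fin_cases j <;>
        simp [Matrix.vecHead, Matrix.vecTail] <;> field_simp <;> ring
end

section
/- For (s,t) ∈ ℝ² with s > 0 and st - s³ - 1 > 0, the point (x,y,z) = Ψ(s,t) satisfies x ≥ 9 and y ≥ 9, where Ψ(s,t) = (3 + (3+3s+t)²/(st-s³-1), 3 + s(3+3s+t)²/(st-s³-1), 3 + t(3+3s+t)²/(st-s³-1)). -/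
theorem stmt_16 (s t : ℝ) (hs : 0 < s) (h : 0 < s * t - s ^ 3 - 1) :
    9 ≤ 3 + (3 + 3 * s + t) ^ 2 / (s * t - s ^ 3 - 1) ∧
    9 ≤ 3 + s * (3 + 3 * s + t) ^ 2 / (s * t - s ^ 3 - 1) := by
  have ht : 0 < t := by nlinarith [sq_nonneg s]
  constructor
  · have h1 : 6 * (s * t - s ^ 3 - 1) ≤ (3 + 3 * s + t) ^ 2 := by
      nlinarith [sq_nonneg t, sq_nonneg s, pow_pos hs 3]
    have := (le_div_iff₀ h).mpr h1
    linarith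
  · have h1 : 6 * (s * t - s ^ 3 - 1) ≤ s * (3 + 3 * s + t) ^ 2 := by
      nlinarith [mul_pos hs ht, mul_pos (mul_pos hs ht) ht, mul_pos (mul_pos hs hs) ht, pow_pos hs 3, mul_pos hs hs]
    have := (le_div_iff₀ h).mpr h1
    linarith
end

section
/- If a representation of the free group on two generators into SL(3,ℂ) sends both generators g₁, g₂ to matrices with a common invariant line spanned by e₁, with g₁ = A₁ the Jordan block [[1,1,0],[0,1,1],[0,0,1]] and g₂ upper triangular in the first column (entries (2,1) and (3,1) zero) and unipotent with tr(g₁g₂) = 3, then the character map evaluates to (3,3,3): tr(g₁g₂⁻¹) = tr(g₁⁻¹g₂) = tr(g₁g₂g₁⁻¹g₂⁻¹) = 3. -/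
/-!
Triangularity makes everything visible on the diagonal. The entries below the diagonal of `g₂`
vanish (the last one because `tr(A₁ g₂) - tr g₂ = g₂ 1 0 + g₂ 2 1`), so the diagonal entries of
`g₂` have power sums `3, 3` and product `1`; hence they are the roots of `(X - 1)³` and `g₂` is
upper unitriangular. Upper unitriangular matrices form a group containing `A₁` and `g₂`, and every
one of them has trace `3`.
-/

open Matrix

theorem eq_one_of_add_eq_three_of_sq_add_eq_three_of_mul_eq_one {R : Type*} [CommRing R]
    [IsDomain R] [NeZero (2 : R)] {a b c : R} (h1 : a + b + c = 3)
    (h2 : a ^ 2 + b ^ 2 + c ^ 2 = 3) (h3 : a * b * c = 1) : a = 1 ∧ b = 1 ∧ c = 1 := by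
  -- by Newton's identities `(X - a) (X - b) (X - c) = X³ - 3X² + 3X - 1`
  have root {x : R} (hx : (x - a) * (x - b) * (x - c) = 0) : x = 1 := by
    have : 2 * (x - 1) ^ 3 = 0 := by
      linear_combination 2 * hx + (2 * x ^ 2 - (a + b + c + 3) * x) * h1 + x * h2 + 2 * h3
    have := (mul_eq_zero.1 this).resolve_left two_ne_zero
    exact sub_eq_zero.1 (pow_eq_zero_iff three_ne_zero |>.1 this)
  exact ⟨root (by ring), root (by ring), root (by ring)⟩

namespace Matrix

theorem isUpperTriangular_fin_three_iff {R : Type*} [Zero R] {M : Matrix (Fin 3) (Fin 3) R} :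
    M.IsUpperTriangular ↔ M 1 0 = 0 ∧ M 2 0 = 0 ∧ M 2 1 = 0 := by
  refine ⟨fun h => ⟨h (by decide), h (by decide), h (by decide)⟩, fun ⟨h10, h20, h21⟩ i j hij => ?_⟩
  fin_cases i <;> fin_cases j <;> simp_all

variable {n R : Type*} [Fintype n] [LinearOrder n]

theorem IsUpperTriangular.diag_mul [NonUnitalNonAssocSemiring R] {M N : Matrix n n R}
    (hM : M.IsUpperTriangular) (hN : N.IsUpperTriangular) : (M * N).diag = M.diag * N.diag := by
  ext i
  simp only [diag_apply, mul_apply, Pi.mul_apply]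
  refine Finset.sum_eq_single i (fun k _ hki => ?_) (by simp)
  rcases hki.lt_or_gt with hk | hk
  · rw [hM hk, zero_mul]
  · rw [hN hk, mul_zero]

def IsUpperUnitriangular [Zero R] [One R] (M : Matrix n n R) : Prop :=
  M.IsUpperTriangular ∧ M.diag = 1

namespace IsUpperUnitriangular

variable [CommRing R] {M N : Matrix n n R}

theorem mul (hM : M.IsUpperUnitriangular) (hN : N.IsUpperUnitriangular) :
    (M * N).IsUpperUnitriangular :=
  ⟨hM.1.mul hN.1, by rw [hM.1.diag_mul hN.1, hM.2, hN.2, one_mul]⟩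

theorem trace_eq (hM : M.IsUpperUnitriangular) : M.trace = Fintype.card n := by
  rw [trace, hM.2]
  simp

variable [DecidableEq n]

theorem det_eq_one (hM : M.IsUpperUnitriangular) : M.det = 1 := by
  simp [det_of_isUpperTriangular hM.1, ← diag_apply, hM.2]

theorem inv (hM : M.IsUpperUnitriangular) : M⁻¹.IsUpperUnitriangular := by
  have hdet : IsUnit M.det := by simp [hM.det_eq_one]
  have := invertibleOfIsUnitDet M hdet
  have hinv : M⁻¹.IsUpperTriangular := blockTriangular_inv_of_blockTriangular hM.1
  refine ⟨hinv, ?_⟩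
  have := congr_arg diag (nonsing_inv_mul M hdet)
  rwa [hinv.diag_mul hM.1, hM.2, mul_one, diag_one] at this

end IsUpperUnitriangular

theorem IsUpperTriangular.isUpperUnitriangular_of_det_of_trace {R : Type*} [CommRing R]
    [IsDomain R] [NeZero (2 : R)] {M : Matrix (Fin 3) (Fin 3) R} (hM : M.IsUpperTriangular)
    (hdet : M.det = 1) (htr : M.trace = 3) (htr2 : (M * M).trace = 3) :
    M.IsUpperUnitriangular := by
  rw [det_of_isUpperTriangular hM, Fin.prod_univ_three] at hdet
  rw [trace, hM.diag_mul hM] at htr2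
  simp only [trace, Fin.sum_univ_three, diag_apply, Pi.mul_apply] at htr htr2
  obtain ⟨h₀, h₁, h₂⟩ := eq_one_of_add_eq_three_of_sq_add_eq_three_of_mul_eq_one htr
    (by linear_combination htr2) hdet
  refine ⟨hM, ?_⟩
  ext i
  fin_cases i <;> assumption

end Matrix

theorem stmt_18 (g₂ : Matrix (Fin 3) (Fin 3) ℂ)
    (hdet : g₂.det = 1) (htr : g₂.trace = 3) (htr2 : (g₂ * g₂).trace = 3)
    (h21 : g₂ 1 0 = 0) (h31 : g₂ 2 0 = 0)
    (hA : ((!![(1:ℂ),1,0; 0,1,1; 0,0,1]) * g₂).trace = 3) :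
    let A₁ : Matrix (Fin 3) (Fin 3) ℂ := !![1,1,0; 0,1,1; 0,0,1]
    (A₁ * g₂⁻¹).trace = 3 ∧ (A₁⁻¹ * g₂).trace = 3 ∧
      (A₁ * g₂ * A₁⁻¹ * g₂⁻¹).trace = 3 := by
  intro A₁
  have hA₁ : A₁.IsUpperUnitriangular :=
    ⟨isUpperTriangular_fin_three_iff.2 (by simp [A₁]), by ext i; fin_cases i <;> rfl⟩
  have h32 : g₂ 2 1 = 0 := by
    simp only [trace_fin_three, mul_apply, Fin.sum_univ_three] at htr hA
    simp [h21] at hA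
    linear_combination hA - htr
  have hg₂ : g₂.IsUpperUnitriangular :=
    (isUpperTriangular_fin_three_iff.2 ⟨h21, h31, h32⟩).isUpperUnitriangular_of_det_of_trace
      hdet htr htr2
  have htrace {M : Matrix (Fin 3) (Fin 3) ℂ} (hM : M.IsUpperUnitriangular) : M.trace = 3 := by
    simp [hM.trace_eq]
  exact ⟨htrace (hA₁.mul hg₂.inv), htrace (hA₁.inv.mul hg₂),
    htrace (((hA₁.mul hg₂).mul hA₁.inv).mul hg₂.inv)⟩
end
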